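/- arXiv:2302.09641 — 7 statements merged into one kernel-verified Lean document; each statement's English description precedes it below -/
import Mathlib

section
/- Let N ≥ 3, σ > -2, m > 0, and set p = p_s(σ) = m(N+2σ+2)/(N-2). For every C > 0, the function U_C(x) = [ (N-2)(N+σ)C / (|x|^{σ+2} + C)^2 ]^{(N-2)/(2m(σ+2))} is a stationary solution of the equation ∂_t u = Δ u^m + |x|^σ u^p on ℝ^N \ {0}, i.e. Δ(U_C^m)(x) + |x|^σ U_C(x)^p = 0 for all x ≠ 0. -/
open Real Filter Topology

private lemma aux_pow_collapse (A D e : ℝ) (hA : 0 < A) (hD : 0 < D) :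
    (A / D ^ 2) ^ e = A ^ e * D ^ (-(2 * e)) := by
  rw [Real.div_rpow hA.le (by positivity), ← Real.rpow_natCast D 2,
    ← Real.rpow_mul hD.le, div_eq_mul_inv, ← Real.rpow_neg hD.le]
  norm_num

theorem stationary_solutions_sobolev (N : ℕ) (hN : 3 ≤ N) (σ m C p : ℝ)
    (hσ : -2 < σ) (hm : 0 < m) (hC : 0 < C)
    (hp : p = m * ((N : ℝ) + 2 * σ + 2) / ((N : ℝ) - 2))
    (U : ℝ → ℝ)
    (hU : ∀ r : ℝ, U r = (((N : ℝ) - 2) * ((N : ℝ) + σ) * C /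
        ((r ^ (σ + 2) + C) ^ 2)) ^ (((N : ℝ) - 2) / (2 * m * (σ + 2)))) :
    ∀ r : ℝ, 0 < r →
      deriv (deriv (fun s => U s ^ m)) r + ((N : ℝ) - 1) / r * deriv (fun s => U s ^ m) r
        + r ^ σ * U r ^ p = 0 := by
  have hσ2 : (0:ℝ) < σ + 2 := by linarith
  have hN2 : (0:ℝ) < (N:ℝ) - 2 := by
    have h3 : (3:ℝ) ≤ (N:ℝ) := by exact_mod_cast hN
    linarith
  have hNσ : (0:ℝ) < (N:ℝ) + σ := by linarith
  obtain ⟨A, hAdef⟩ : ∃ A : ℝ, A = ((N:ℝ) - 2) * ((N:ℝ) + σ) * C := ⟨_, rfl⟩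
  have hA : 0 < A := by rw [hAdef]; positivity
  obtain ⟨β, hβdef⟩ : ∃ b : ℝ, b = ((N:ℝ) - 2) / (σ + 2) := ⟨_, rfl⟩
  have hβ : β * (σ + 2) = (N:ℝ) - 2 := by rw [hβdef]; exact div_mul_cancel₀ _ hσ2.ne'
  obtain ⟨K, hKdef⟩ : ∃ k : ℝ, k = A ^ (β / 2) := ⟨_, rfl⟩
  obtain ⟨α, hαdef⟩ : ∃ a : ℝ, a = ((N:ℝ) - 2) / (2 * m * (σ + 2)) := ⟨_, rfl⟩
  simp only [← hAdef, ← hαdef] at hU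
  set f : ℝ → ℝ := fun s => K * (s ^ (σ+2) + C) ^ (-β) with hfdef
  set f1 : ℝ → ℝ := fun s => -K * ((N:ℝ) - 2) * s ^ (σ+1) * (s ^ (σ+2) + C) ^ (-β-1)
    with hf1def
  have hDpos : ∀ s : ℝ, 0 < s → 0 < s ^ (σ+2) + C := by
    intro s hs; positivity
  have key : ∀ s : ℝ, 0 < s → ∀ q : ℝ,
      U s ^ q = A ^ (α * q) * (s ^ (σ+2) + C) ^ (-(2 * (α * q))) := by
    intro s hs q
    have hD := hDpos s hs
    have hX : (0:ℝ) ≤ A / (s ^ (σ+2) + C) ^ 2 := by positivity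
    rw [hU s, ← Real.rpow_mul hX, aux_pow_collapse _ _ _ hA hD]
  have hUm : ∀ s : ℝ, 0 < s → U s ^ m = f s := by
    intro s hs
    have h1 : α * m = β / 2 := by
      rw [hαdef, hβdef]; field_simp
    rw [key s hs m, h1, show -(2 * (β / 2)) = -β from by ring, ← hKdef]
  have hUp : ∀ s : ℝ, 0 < s → U s ^ p = K * A * (s ^ (σ+2) + C) ^ (-β - 2) := by
    intro s hs
    have h1 : α * p = β / 2 + 1 := by
      rw [hαdef, hβdef, hp]; field_simp; ring
    rw [key s hs p, h1, Real.rpow_add_one hA.ne', ← hKdef,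
      show -(2 * (β / 2 + 1)) = -β - 2 from by ring]
  have hDer : ∀ s : ℝ, 0 < s → HasDerivAt f (f1 s) s := by
    intro s hs
    have hD := hDpos s hs
    have h1 : HasDerivAt (fun x : ℝ => x ^ (σ+2) + C) ((σ+2) * s ^ (σ+1)) s := by
      have h := (Real.hasDerivAt_rpow_const (x := s) (p := σ+2) (Or.inl hs.ne')).add_const C
      rw [show σ + 2 - 1 = σ + 1 from by ring] at h
      exact h
    have h2 : HasDerivAt (fun y : ℝ => y ^ (-β)) ((-β) * (s ^ (σ+2) + C) ^ (-β-1))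
        (s ^ (σ+2) + C) := by
      have h := Real.hasDerivAt_rpow_const (x := s ^ (σ+2) + C) (p := -β) (Or.inl hD.ne')
      rw [show -β - 1 = -β - 1 from rfl] at h
      exact h
    have h3 := (h2.comp s h1).const_mul K
    have h4 : HasDerivAt f (K * ((-β) * (s ^ (σ+2) + C) ^ (-β-1) * ((σ+2) * s ^ (σ+1)))) s := by
      simpa [hfdef, Function.comp_def] using h3
    have h5 : f1 s = K * ((-β) * (s ^ (σ+2) + C) ^ (-β-1) * ((σ+2) * s ^ (σ+1))) := by
      simp only [hf1def]
      linear_combination (K * s ^ (σ+1) * (s ^ (σ+2) + C) ^ (-β-1)) * hβ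
    rw [h5]; exact h4
  intro r hr
  have hD := hDpos r hr
  have ha : HasDerivAt (fun s : ℝ => s ^ (σ+1)) ((σ+1) * r ^ σ) r := by
    have h := Real.hasDerivAt_rpow_const (x := r) (p := σ+1) (Or.inl hr.ne')
    rw [show σ + 1 - 1 = σ from by ring] at h
    exact h
  have h1 : HasDerivAt (fun x : ℝ => x ^ (σ+2) + C) ((σ+2) * r ^ (σ+1)) r := by
    have h := (Real.hasDerivAt_rpow_const (x := r) (p := σ+2) (Or.inl hr.ne')).add_const C
    rw [show σ + 2 - 1 = σ + 1 from by ring] at h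
    exact h
  have hb : HasDerivAt (fun s : ℝ => (s ^ (σ+2) + C) ^ (-β-1))
      ((-β-1) * (r ^ (σ+2) + C) ^ (-β-2) * ((σ+2) * r ^ (σ+1))) r := by
    have h2 : HasDerivAt (fun y : ℝ => y ^ (-β-1)) ((-β-1) * (r ^ (σ+2) + C) ^ (-β-2))
        (r ^ (σ+2) + C) := by
      have h := Real.hasDerivAt_rpow_const (x := r ^ (σ+2) + C) (p := -β-1) (Or.inl hD.ne')
      rw [show -β - 1 - 1 = -β - 2 from by ring] at h
      exact h
    simpa [Function.comp_def] using h2.comp r h1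
  have hf1' : HasDerivAt f1
      (-K * ((N:ℝ) - 2) * ((σ+1) * r ^ σ * (r ^ (σ+2) + C) ^ (-β-1)
        + r ^ (σ+1) * ((-β-1) * (r ^ (σ+2) + C) ^ (-β-2) * ((σ+2) * r ^ (σ+1))))) r := by
    have h := (ha.mul hb).const_mul (-K * ((N:ℝ) - 2))
    have heq : f1 = fun s => -K * ((N:ℝ) - 2) * (s ^ (σ+1) * (s ^ (σ+2) + C) ^ (-β-1)) := by
      funext s; simp only [hf1def]; ring
    rw [heq]
    convert h using 1
    all_goals rfl
  have hev : ∀ᶠ s in 𝓝 r, (0:ℝ) < s := eventually_gt_nhds hr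
  have hUf : (fun s => U s ^ m) =ᶠ[𝓝 r] f := hev.mono fun s hs => hUm s hs
  have hdf : deriv f =ᶠ[𝓝 r] f1 := hev.mono fun s hs => (hDer s hs).deriv
  have hd1 : deriv (fun s => U s ^ m) r = f1 r := by
    rw [hUf.deriv_eq, (hDer r hr).deriv]
  have hd2 : deriv (deriv (fun s => U s ^ m)) r
      = -K * ((N:ℝ) - 2) * ((σ+1) * r ^ σ * (r ^ (σ+2) + C) ^ (-β-1)
        + r ^ (σ+1) * ((-β-1) * (r ^ (σ+2) + C) ^ (-β-2) * ((σ+2) * r ^ (σ+1)))) := by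
    rw [(hUf.deriv.trans hdf).deriv_eq, hf1'.deriv]
  rw [hd1, hd2, hUp r hr]
  simp only [hf1def]
  have e1 : r ^ (σ+1) = r ^ σ * r := Real.rpow_add_one hr.ne' σ
  have e2 : r ^ (σ+2) = r ^ σ * r * r := by
    rw [show σ + 2 = (σ + 1) + 1 from by ring, Real.rpow_add_one hr.ne', e1]
  have e3 : (r ^ (σ+2) + C) ^ (-β-1) = (r ^ (σ+2) + C) ^ (-β-2) * (r ^ (σ+2) + C) := by
    rw [show -β - 1 = (-β - 2) + 1 from by ring, Real.rpow_add_one hD.ne']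
  rw [e3, e1, e2, hAdef]
  generalize hE : (r ^ σ * r * r + C) ^ (-β-2) = E
  field_simp
  linear_combination (K * ((N:ℝ)-2) * (r^σ) * (r^σ) * r^2 *
    E) * hβ
end

section
/- Let N ≥ 3, 0 < m < 1, σ > 0, p_c(σ) < p < p_L(σ), and let K = [ m(σ+2)(N-2)(p - p_c(σ)) / (p-m)^2 ]^{1/(p-m)}. Then u(x) = K |x|^{-(σ+2)/(p-m)} is a stationary solution of ∂_t u = Δ u^m + |x|^σ u^p on ℝ^N \ {0}, i.e. Δ(u^m)(x) + |x|^σ u(x)^p = 0 for x ≠ 0. -/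
/-!
On `r > 0` we have `u ^ m = K ^ m * r ^ β` with `β = α m`, `α = -(σ + 2) / (p - m)`, and the
radial Laplacian of `r ^ β` is `β (β + N - 2) r ^ (β - 2)`. The exponent `α` is chosen so that
`r ^ σ * u ^ p = K ^ m * K ^ (p - m) * r ^ (β - 2)` is the same power of `r`, and `K` so that
`K ^ (p - m) = -β (β + N - 2)`; this is positive exactly when `p > p_c(σ)`.
-/

open Real Filter Topology

theorem deriv_const_mul_rpow_const (c β : ℝ) :
    deriv (fun s : ℝ => c * s ^ β) = fun s => c * β * s ^ (β - 1) := by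
  funext s
  simp only [deriv_const_mul_field', Real.deriv_rpow_const, mul_assoc]

theorem radial_laplacian_const_mul_rpow (n c β : ℝ) {r : ℝ} (hr : 0 < r) :
    deriv (deriv fun s : ℝ => c * s ^ β) r + (n - 1) / r * deriv (fun s : ℝ => c * s ^ β) r
      = c * β * (β + n - 2) * r ^ (β - 2) := by
  have hr1 : r ^ (β - 1) = r * r ^ (β - 2) := by
    rw [show β - 1 = 1 + (β - 2) by ring, rpow_add hr, rpow_one]
  simp only [deriv_const_mul_rpow_const]
  rw [show β - 1 - 1 = β - 2 by ring, hr1]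
  field_simp
  ring

theorem mul_rpow_rpow {K r : ℝ} (hK : 0 ≤ K) (hr : 0 ≤ r) (α q : ℝ) :
    (K * r ^ α) ^ q = K ^ q * r ^ (α * q) := by
  rw [mul_rpow hK (rpow_nonneg hr _), ← rpow_mul hr]

theorem mul_rpow_rpow_eventuallyEq {K r : ℝ} (hK : 0 ≤ K) (hr : 0 < r) (α q : ℝ) :
    (fun s => (K * s ^ α) ^ q) =ᶠ[𝓝 r] fun s => K ^ q * s ^ (α * q) := by
  filter_upwards [eventually_gt_nhds hr] with s hs using mul_rpow_rpow hK hs.le α q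

theorem singular_exponent_balance {N m σ p α : ℝ} (hN : N - 2 ≠ 0) (hpm : p - m ≠ 0)
    (hα : α = -(σ + 2) / (p - m)) :
    α * m * (α * m + N - 2)
      + m * (σ + 2) * (N - 2) * (p - m * (N + σ) / (N - 2)) / (p - m) ^ 2 = 0 := by
  subst hα
  field_simp
  ring

theorem stationary_singular_solution_general (N : ℕ) (hN : 3 ≤ N) (m σ p K : ℝ)
    (hm0 : 0 < m) (hσ : 0 < σ)
    (hpc : m * ((N : ℝ) + σ) / ((N : ℝ) - 2) < p)
    (hK : K = (m * (σ + 2) * ((N : ℝ) - 2) * (p - m * ((N : ℝ) + σ) / ((N : ℝ) - 2)) /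
        (p - m) ^ 2) ^ (1 / (p - m)))
    (u : ℝ → ℝ) (hu : ∀ r : ℝ, u r = K * r ^ (-(σ + 2) / (p - m))) :
    ∀ r : ℝ, 0 < r →
      deriv (deriv (fun s => u s ^ m)) r + ((N : ℝ) - 1) / r * deriv (fun s => u s ^ m) r
        + r ^ σ * u r ^ p = 0 := by
  intro r hr
  have hN2 : (0 : ℝ) < N - 2 := by
    have : (3 : ℝ) ≤ N := by exact_mod_cast hN
    linarith
  have hpm : p - m ≠ 0 := by
    have : m < m * ((N : ℝ) + σ) / ((N : ℝ) - 2) := by rw [lt_div_iff₀ hN2]; nlinarith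
    linarith
  set A := m * (σ + 2) * ((N : ℝ) - 2) * (p - m * ((N : ℝ) + σ) / ((N : ℝ) - 2)) / (p - m) ^ 2
  have hA0 : 0 < A := by
    have : 0 < p - m * ((N : ℝ) + σ) / ((N : ℝ) - 2) := by linarith
    positivity
  have hK0 : 0 < K := hK ▸ rpow_pos_of_pos hA0 _
  have hKp : K ^ p = K ^ m * A := by
    have hKA : K ^ (p - m) = A := by
      rw [hK, ← rpow_mul hA0.le, one_div_mul_cancel hpm, rpow_one]
    rw [← hKA, ← rpow_add hK0, add_sub_cancel]
  set α := -(σ + 2) / (p - m) with hα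
  have hr_exp : r ^ σ * r ^ (α * p) = r ^ (α * m - 2) := by
    rw [← rpow_add hr, hα]
    field_simp
    ring_nf
  obtain rfl : u = fun s => K * s ^ α := funext hu
  have hum := mul_rpow_rpow_eventuallyEq hK0.le hr α m
  rw [hum.deriv.deriv_eq, hum.deriv_eq, radial_laplacian_const_mul_rpow _ _ _ hr,
    mul_rpow_rpow hK0.le hr.le, hKp]
  linear_combination (K ^ m * r ^ (α * m - 2)) * singular_exponent_balance hN2.ne' hpm hα
    + K ^ m * A * hr_exp

theorem stationary_singular_solution (N : ℕ) (hN : 3 ≤ N) (m σ p K : ℝ)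
    (hm0 : 0 < m) (hm1 : m < 1) (hσ : 0 < σ)
    (hpc : m * ((N : ℝ) + σ) / ((N : ℝ) - 2) < p) (hpL : p < 1 + σ * (1 - m) / 2)
    (hK : K = (m * (σ + 2) * ((N : ℝ) - 2) * (p - m * ((N : ℝ) + σ) / ((N : ℝ) - 2)) /
        (p - m) ^ 2) ^ (1 / (p - m)))
    (u : ℝ → ℝ) (hu : ∀ r : ℝ, u r = K * r ^ (-(σ + 2) / (p - m))) :
    ∀ r : ℝ, 0 < r →
      deriv (deriv (fun s => u s ^ m)) r + ((N : ℝ) - 1) / r * deriv (fun s => u s ^ m) r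
        + r ^ σ * u r ^ p = 0 :=
  stationary_singular_solution_general N hN m σ p K hm0 hσ hpc hK u hu
end

section
/- Let N ≥ 3, 0 < m < 1, σ > 0, and p = p_s(σ) = m(N+2σ+2)/(N-2). The curve Z = -((N+σ)/(N-2)) (mY + N-2) Y is an invariant curve (explicit trajectory) of the planar system Ẏ = -(N-2)Y - mY² - Z, Ż = (σ+2)Z + (p-m)YZ: that is, if Z(Y) = -((N+σ)/(N-2))(mY+N-2)Y, then along the vector field one has dZ/dY · (-(N-2)Y - mY² - Z(Y)) = (σ+2+(p-m)Y) Z(Y) for all Y where the first factor is nonzero. -/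
/-!
Writing `a = N - 2` and `k = (N + σ)/(N - 2)`, the curve is `Z = -k (m Y + a) Y`, along which
`Ẏ = (k - 1)(m Y + a) Y`. Hence `Z' Ẏ = (k - 1)(2 m Y + a) Z` for every `k`, `a`, `m`, and the
particular choice of `k` and `p` makes `(k - 1)(2 m Y + a)` equal to `σ + 2 + (p - m) Y`.
-/

theorem hasDerivAt_parabola (k m a Y : ℝ) :
    HasDerivAt (fun Y => -k * (m * Y + a) * Y) (-k * (2 * m * Y + a)) Y := by
  have h : HasDerivAt (fun Y => -k * (m * Y + a) * Y) (-k * (m * 1) * Y + -k * (m * Y + a) * 1) Y :=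
    ((((hasDerivAt_id' Y).const_mul m).add_const a).const_mul (-k)).mul (hasDerivAt_id' Y)
  convert h using 1
  ring

theorem deriv_parabola_mul_flow (k m a Y : ℝ) :
    deriv (fun Y => -k * (m * Y + a) * Y) Y * (-a * Y - m * Y ^ 2 - -k * (m * Y + a) * Y)
      = (k - 1) * (2 * m * Y + a) * (-k * (m * Y + a) * Y) := by
  rw [(hasDerivAt_parabola k m a Y).deriv]
  ring

theorem explicit_invariant_curve_general (N : ℕ) (hN : 3 ≤ N) (m σ p : ℝ)
    (hp : p = m * ((N : ℝ) + 2 * σ + 2) / ((N : ℝ) - 2))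
    (Zc : ℝ → ℝ)
    (hZc : ∀ Y : ℝ, Zc Y = -(((N : ℝ) + σ) / ((N : ℝ) - 2)) * (m * Y + ((N : ℝ) - 2)) * Y) :
    ∀ Y : ℝ, (-((N : ℝ) - 2) * Y - m * Y ^ 2 - Zc Y) ≠ 0 →
      deriv Zc Y * (-((N : ℝ) - 2) * Y - m * Y ^ 2 - Zc Y)
        = (σ + 2 + (p - m) * Y) * Zc Y := by
  intro Y _
  set k := ((N : ℝ) + σ) / ((N : ℝ) - 2)
  have hN2 : (N : ℝ) - 2 ≠ 0 := by
    have : (3 : ℝ) ≤ N := by exact_mod_cast hN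
    linarith
  have hrate : σ + 2 + (p - m) * Y = (k - 1) * (2 * m * Y + ((N : ℝ) - 2)) := by
    rw [hp]
    simp only [k]
    field_simp
    ring
  rw [funext hZc, hrate]
  exact deriv_parabola_mul_flow k m _ Y

theorem explicit_invariant_curve (N : ℕ) (hN : 3 ≤ N) (m σ p : ℝ)
    (hm0 : 0 < m) (hm1 : m < 1) (hσ : 0 < σ)
    (hp : p = m * ((N : ℝ) + 2 * σ + 2) / ((N : ℝ) - 2))
    (Zc : ℝ → ℝ)
    (hZc : ∀ Y : ℝ, Zc Y = -(((N : ℝ) + σ) / ((N : ℝ) - 2)) * (m * Y + ((N : ℝ) - 2)) * Y) :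
    ∀ Y : ℝ, (-((N : ℝ) - 2) * Y - m * Y ^ 2 - Zc Y) ≠ 0 →
      deriv Zc Y * (-((N : ℝ) - 2) * Y - m * Y ^ 2 - Zc Y)
        = (σ + 2 + (p - m) * Y) * Zc Y :=
  explicit_invariant_curve_general N hN m σ p hp Zc hZc
end

section
/- Let N ≥ 3, 0 < m < 1, σ > 0, 1 < p < p_L(σ), p ≠ p_s(σ). Consider the planar system in variables (T,Z): Ṫ = -((N-2)(p-p_s(σ))/(p-m)) T - (m/(p-m)) T² - (p-m) Z + (N-2)(p-p_c(σ))(σ+2)/(p-m), Ż = TZ, on the half-plane Z > 0. Then with a = (3m-p)/(p-m), the divergence of the vector field multiplied by Z^a equals -((N-2)(p-p_s(σ))/(p-m)) Z^a, which has constant sign on {Z>0}; hence by the Dulac criterion the system has no periodic orbits in {Z > 0}. -/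
/-! Multiplying the field by `Z ^ a` turns `Ż = T Z` into `T Z ^ (a + 1)`, whose `Z`-derivative
`(a + 1) T Z ^ a` cancels the `T`-dependent part `-2 (m / (p - m)) T Z ^ a` of the `T`-derivative
exactly when `a + 1 = 2 m / (p - m)`, i.e. for `a = (3m - p) / (p - m)`. Only the linear
coefficient survives, and it vanishes only at `p = p_s(σ)`. -/

theorem hasDerivAt_rpow_mul_self {a z : ℝ} (hz : z ≠ 0) :
    HasDerivAt (fun x : ℝ => x ^ a * x) ((a + 1) * z ^ a) z := by
  have h := Real.hasDerivAt_rpow_const (p := a + 1) (Or.inl hz)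
  rw [add_sub_cancel_right] at h
  exact h.congr_of_eventuallyEq <|
    Filter.eventually_of_mem (isOpen_ne.mem_nhds hz) fun x hx => (Real.rpow_add_one hx a).symm

theorem weighted_divergence_eq {a b c d e T Z : ℝ} (hZ : Z ≠ 0) (hab : a + 1 = 2 * b) :
    deriv (fun T' => Z ^ a * (-c * T' - b * T' ^ 2 - d * Z + e)) T
      + deriv (fun Z' => Z' ^ a * (T * Z')) Z = -c * Z ^ a := by
  have hT : HasDerivAt (fun T' => Z ^ a * (-c * T' - b * T' ^ 2 - d * Z + e))
      (Z ^ a * (-c - b * (2 * T))) T := by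
    simpa using (((hasDerivAt_id T).const_mul (-c)).sub ((hasDerivAt_pow 2 T).const_mul b)
      |>.sub_const (d * Z) |>.add_const e |>.const_mul (Z ^ a))
  have hZ : HasDerivAt (fun Z' => Z' ^ a * (T * Z')) (T * ((a + 1) * Z ^ a)) Z := by
    simpa only [mul_left_comm] using (hasDerivAt_rpow_mul_self (a := a) hZ).const_mul T
  rw [hT.deriv, hZ.deriv, hab]
  ring

theorem dulac_divergence_identity_general (N : ℕ) (hN : 3 ≤ N) (m σ p a ps pc : ℝ)
    (hm1 : m < 1) (hp1 : 1 < p)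
    (hpne : p ≠ ps) (ha : a = (3 * m - p) / (p - m)) :
    ∀ T Z : ℝ, 0 < Z →
      (deriv (fun T' => Z ^ a * (-(((N : ℝ) - 2) * (p - ps) / (p - m)) * T'
            - (m / (p - m)) * T' ^ 2 - (p - m) * Z
            + ((N : ℝ) - 2) * (p - pc) * (σ + 2) / (p - m))) T
        + deriv (fun Z' => Z' ^ a * (T * Z')) Z
        = -(((N : ℝ) - 2) * (p - ps) / (p - m)) * Z ^ a) ∧
      -(((N : ℝ) - 2) * (p - ps) / (p - m)) * Z ^ a ≠ 0 := by
  intro T Z hZ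
  have hpm : p - m ≠ 0 := by linarith
  have hN2 : (N : ℝ) - 2 ≠ 0 := by
    have : (3 : ℝ) ≤ N := by exact_mod_cast hN
    linarith
  have hexp : a + 1 = 2 * (m / (p - m)) := by
    rw [ha]
    field_simp
    ring
  refine ⟨weighted_divergence_eq hZ.ne' hexp, ?_⟩
  have hc : ((N : ℝ) - 2) * (p - ps) / (p - m) ≠ 0 :=
    div_ne_zero (mul_ne_zero hN2 (sub_ne_zero.mpr hpne)) hpm
  exact mul_ne_zero (neg_ne_zero.mpr hc) (Real.rpow_pos_of_pos hZ a).ne'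

theorem dulac_divergence_identity (N : ℕ) (hN : 3 ≤ N) (m σ p a ps pc : ℝ)
    (hm0 : 0 < m) (hm1 : m < 1) (hσ : 0 < σ) (hp1 : 1 < p)
    (hpL : p < 1 + σ * (1 - m) / 2)
    (hps : ps = m * ((N : ℝ) + 2 * σ + 2) / ((N : ℝ) - 2))
    (hpc : pc = m * ((N : ℝ) + σ) / ((N : ℝ) - 2))
    (hpne : p ≠ ps) (ha : a = (3 * m - p) / (p - m)) :
    ∀ T Z : ℝ, 0 < Z →
      (deriv (fun T' => Z ^ a * (-(((N : ℝ) - 2) * (p - ps) / (p - m)) * T'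
            - (m / (p - m)) * T' ^ 2 - (p - m) * Z
            + ((N : ℝ) - 2) * (p - pc) * (σ + 2) / (p - m))) T
        + deriv (fun Z' => Z' ^ a * (T * Z')) Z
        = -(((N : ℝ) - 2) * (p - ps) / (p - m)) * Z ^ a) ∧
      -(((N : ℝ) - 2) * (p - ps) / (p - m)) * Z ^ a ≠ 0 :=
  dulac_divergence_identity_general N hN m σ p a ps pc hm1 hp1 hpne ha
end

section
/- Let N ≥ 3, 0 < m < 1, σ > 0, p_c(σ) < p < p_L(σ). The point P₂ = (0, -(σ+2)/(p-m), (N-2)(σ+2)(p-p_c(σ))/(p-m)²) is a critical point of the system Ẋ = X(2+(1-m)Y), Ẏ = X-(N-2)Y-Z-mY²+((p-m)/(σ+2))XY, Ż = Z(σ+2+(p-m)Y), and its Z-coordinate is positive. The Jacobian at P₂ has one eigenvalue λ₁ = L/(p-m) < 0, and the remaining two eigenvalues λ₂, λ₃ satisfy λ₂+λ₃ = -(N-2)(p-p_s(σ))/(p-m) and λ₂λ₃ = (N-2)(σ+2)(p-p_c(σ))/(p-m) > 0. -/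
open Polynomial

set_option maxHeartbeats 1000000 in
theorem linearization_at_P2 (N : ℕ) (hN : 3 ≤ N) (m σ p L pc ps : ℝ)
    (hm0 : 0 < m) (hm1 : m < 1) (hσ : 0 < σ)
    (hpcd : pc = m * ((N : ℝ) + σ) / ((N : ℝ) - 2))
    (hpsd : ps = m * ((N : ℝ) + 2 * σ + 2) / ((N : ℝ) - 2))
    (hLd : L = σ * (m - 1) + 2 * (p - 1))
    (hpc : pc < p) (hpL : p < 1 + σ * (1 - m) / 2)
    (F : (Fin 3 → ℝ) → Fin 3 → ℝ)
    (hF : ∀ v : Fin 3 → ℝ, F v =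
      ![v 0 * (2 + (1 - m) * v 1),
        v 0 - ((N : ℝ) - 2) * v 1 - v 2 - m * (v 1) ^ 2 + ((p - m) / (σ + 2)) * v 0 * v 1,
        v 2 * (σ + 2 + (p - m) * v 1)])
    (P : Fin 3 → ℝ)
    (hP : P = ![0, -(σ + 2) / (p - m), ((N : ℝ) - 2) * (σ + 2) * (p - pc) / (p - m) ^ 2])
    (J : Matrix (Fin 3) (Fin 3) ℝ)
    (hJ : ∀ i j, J i j = fderiv ℝ (fun v => F v i) P (Pi.single j 1)) :
    F P = 0 ∧ 0 < P 2 ∧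
    J.charpoly = (X - C (L / (p - m))) *
        (X ^ 2 - C (-(((N : ℝ) - 2) * (p - ps) / (p - m))) * X
          + C (((N : ℝ) - 2) * (σ + 2) * (p - pc) / (p - m))) ∧
    L / (p - m) < 0 ∧ 0 < ((N : ℝ) - 2) * (σ + 2) * (p - pc) / (p - m) := by
  have hN2 : (0:ℝ) < (N : ℝ) - 2 := by
    have : (3:ℝ) ≤ (N:ℝ) := by exact_mod_cast hN
    linarith
  have hσ2 : (0:ℝ) < σ + 2 := by linarith
  have hmpc : m < pc := by
    rw [hpcd, lt_div_iff₀ hN2]; nlinarith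
  have hpm : (0:ℝ) < p - m := by linarith
  have hL : L < 0 := by nlinarith
  have hppc : 0 < p - pc := by linarith
  have hP0 : P 0 = 0 := by rw [hP]; rfl
  have hP1 : P 1 = -(σ + 2) / (p - m) := by rw [hP]; rfl
  have hP2 : P 2 = ((N : ℝ) - 2) * (σ + 2) * (p - pc) / (p - m) ^ 2 := by rw [hP]; rfl
  -- F P = 0
  have hFP : F P = 0 := by
    rw [hF]
    funext i
    fin_cases i
    · simp [hP0]
    · show P 0 - ((N : ℝ) - 2) * P 1 - P 2 - m * (P 1) ^ 2 + ((p - m) / (σ + 2)) * P 0 * P 1 = 0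
      rw [hP0, hP1, hP2, hpcd]
      field_simp
      ring
    · show P 2 * (σ + 2 + (p - m) * P 1) = 0
      rw [hP1, hP2]
      field_simp
      ring
  -- derivatives
  have hd : ∀ (i : Fin 3), HasFDerivAt (fun v : Fin 3 → ℝ => v i)
      (ContinuousLinearMap.proj i : (Fin 3 → ℝ) →L[ℝ] ℝ) P :=
    fun i => hasFDerivAt_apply i P
  set pr : Fin 3 → ((Fin 3 → ℝ) →L[ℝ] ℝ) := fun i => ContinuousLinearMap.proj i with hpr
  have hD0 : HasFDerivAt (fun v : Fin 3 → ℝ => v 0 * (2 + (1 - m) * v 1))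
      (P 0 • ((1 - m) • pr 1) + (2 + (1 - m) * P 1) • pr 0) P :=
    (hd 0).mul (((hd 1).const_mul (1 - m)).const_add 2)
  have hD1 : HasFDerivAt
      (fun v : Fin 3 → ℝ => v 0 - ((N : ℝ) - 2) * v 1 - v 2 - m * (v 1 * v 1)
          + ((p - m) / (σ + 2)) * (v 0 * v 1))
      ((((pr 0 - ((N : ℝ) - 2) • pr 1) - pr 2) - m • (P 1 • pr 1 + P 1 • pr 1))
        + ((p - m) / (σ + 2)) • (P 0 • pr 1 + P 1 • pr 0)) P := by
    exact ((((hd 0).sub ((hd 1).const_mul ((N : ℝ) - 2))).sub (hd 2)).sub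
      (((hd 1).mul (hd 1)).const_mul m)).add (((hd 0).mul (hd 1)).const_mul ((p - m) / (σ + 2)))
  have hD2 : HasFDerivAt (fun v : Fin 3 → ℝ => v 2 * (σ + 2 + (p - m) * v 1))
      (P 2 • ((p - m) • pr 1) + (σ + 2 + (p - m) * P 1) • pr 2) P :=
    (hd 2).mul (((hd 1).const_mul (p - m)).const_add (σ + 2))
  have e0 : (fun v : Fin 3 → ℝ => F v 0) = fun v : Fin 3 → ℝ => v 0 * (2 + (1 - m) * v 1) := by
    funext v; rw [hF]; rfl
  have e1 : (fun v : Fin 3 → ℝ => F v 1) = fun v : Fin 3 → ℝ =>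
      v 0 - ((N : ℝ) - 2) * v 1 - v 2 - m * (v 1 * v 1) + ((p - m) / (σ + 2)) * (v 0 * v 1) := by
    funext v; rw [hF]; show _ - _ - _ - _ + _ = _; ring
  have e2 : (fun v : Fin 3 → ℝ => F v 2) = fun v : Fin 3 → ℝ => v 2 * (σ + 2 + (p - m) * v 1) := by
    funext v; rw [hF]; rfl
  have prs : ∀ i j : Fin 3, pr i (Pi.single j 1) = if i = j then 1 else 0 := by
    intro i j
    simp [hpr, Pi.single_apply]
  -- scalar identities
  have hA : 2 + (1 - m) * P 1 = L / (p - m) := by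
    rw [hP1, hLd]; field_simp; ring
  have ha : -(((N:ℝ) - 2)) - 2 * m * P 1 = -(((N : ℝ) - 2) * (p - ps) / (p - m)) := by
    rw [hP1, hpsd]; field_simp; ring
  have hb : (p - m) * P 2 = ((N : ℝ) - 2) * (σ + 2) * (p - pc) / (p - m) := by
    rw [hP2]; field_simp
  have hz : 1 + ((p - m) / (σ + 2)) * P 1 = 0 := by
    rw [hP1]; field_simp; ring
  have hz2 : σ + 2 + (p - m) * P 1 = 0 := by
    rw [hP1]; field_simp; ring
  have htri : ∀ i : Fin 3, i = 0 ∨ i = 1 ∨ i = 2 := by decide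
  have hJM : J = ![![L / (p - m), 0, 0],
      ![0, -(((N : ℝ) - 2) * (p - ps) / (p - m)), -1],
      ![0, ((N : ℝ) - 2) * (σ + 2) * (p - pc) / (p - m), 0]] := by
    funext i j
    rcases htri i with rfl | rfl | rfl
    · rw [hJ, e0, hD0.fderiv]
      rcases htri j with rfl | rfl | rfl <;>
        · simp only [ContinuousLinearMap.add_apply, ContinuousLinearMap.sub_apply,
            ContinuousLinearMap.smul_apply, prs, smul_eq_mul, hP0, Matrix.cons_val_zero,
            Matrix.cons_val_one, Matrix.cons_val_two, Matrix.head_cons, Matrix.tail_cons,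
            Matrix.cons_val', Matrix.empty_val', Matrix.cons_val_fin_one]
          norm_num [Fin.ext_iff]
          first
            | linarith [hA]
            | skip
    · rw [hJ, e1, hD1.fderiv]
      rcases htri j with rfl | rfl | rfl <;>
        · simp only [ContinuousLinearMap.add_apply, ContinuousLinearMap.sub_apply,
            ContinuousLinearMap.smul_apply, prs, smul_eq_mul, hP0, Matrix.cons_val_zero,
            Matrix.cons_val_one, Matrix.cons_val_two, Matrix.head_cons, Matrix.tail_cons,
            Matrix.cons_val', Matrix.empty_val', Matrix.cons_val_fin_one]
          norm_num [Fin.ext_iff]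
          first
            | linarith [hz]
            | linarith [ha]
            | skip
    · rw [hJ, e2, hD2.fderiv]
      rcases htri j with rfl | rfl | rfl <;>
        · simp only [ContinuousLinearMap.add_apply, ContinuousLinearMap.sub_apply,
            ContinuousLinearMap.smul_apply, prs, smul_eq_mul, hP0, Matrix.cons_val_zero,
            Matrix.cons_val_one, Matrix.cons_val_two, Matrix.head_cons, Matrix.tail_cons,
            Matrix.cons_val', Matrix.empty_val', Matrix.cons_val_fin_one]
          norm_num [Fin.ext_iff]
          first
            | linarith [hb]
            | linarith [hz2]
            | skip
  refine ⟨hFP, ?_, ?_, ?_, ?_⟩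
  · rw [hP2]; positivity
  · unfold Matrix.charpoly; rw [Matrix.det_fin_three]
    simp only [Matrix.charmatrix_apply_eq, ne_eq, Fin.reduceEq, not_false_eq_true, Matrix.charmatrix_apply_ne]
    rw [hJM]
    simp
    ring
  · exact div_neg_of_neg_of_pos hL hpm
  · positivity
end

section
/- Let N ≥ 3, 0 < m < m_c = (N-2)/N, σ > 0, and p_c(σ) < p < p_L(σ). Consider the point P₃ = (2(σ+2)(mN-N+2)/(L(1-m)), -2/(1-m), 0), whose first coordinate is positive since mN - N + 2 < 0 and L < 0. Then P₃ is a critical point of the system Ẋ = X(2+(1-m)Y), Ẏ = -X-(N-2)Y-Z-mY²-((p-m)/(σ+2))XY, Ż = Z(σ+2+(p-m)Y), and the Jacobian at P₃ has one eigenvalue λ₃ = -L/(1-m) > 0 while the other two eigenvalues λ₁, λ₂ satisfy λ₁λ₂ = -2(mN-N+2)/(1-m) > 0 and λ₁+λ₂ = [(1-m)²(σ+2)N + 2(m²-1)σ + 4(mp-1)]/(L(1-m)) < 0. -/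
open Polynomial

theorem charpoly_aux3 (M : Matrix (Fin 3) (Fin 3) ℝ)
    (h00 : M 0 0 = 0) (h02 : M 0 2 = 0) (h20 : M 2 0 = 0) (h21 : M 2 1 = 0) :
    M.charpoly = (X - C (M 2 2)) *
      (X ^ 2 - C (M 1 1) * X + C (-(M 0 1 * M 1 0))) := by
  rw [Matrix.charpoly, Matrix.det_fin_three]
  simp [Matrix.charmatrix_apply, h00, h02, h20, h21, map_mul, map_neg]
  ring

set_option maxHeartbeats 1600000 in
theorem linearization_at_P3 (N : ℕ) (hN : 3 ≤ N) (m σ p L pc : ℝ)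
    (hm0 : 0 < m) (hmc : m < ((N : ℝ) - 2) / N) (hσ : 0 < σ)
    (hpcd : pc = m * ((N : ℝ) + σ) / ((N : ℝ) - 2))
    (hLd : L = σ * (m - 1) + 2 * (p - 1))
    (hpc : pc < p) (hpL : p < 1 + σ * (1 - m) / 2)
    (F : (Fin 3 → ℝ) → Fin 3 → ℝ)
    (hF : ∀ v : Fin 3 → ℝ, F v =
      ![v 0 * (2 + (1 - m) * v 1),
        -v 0 - ((N : ℝ) - 2) * v 1 - v 2 - m * (v 1) ^ 2 - ((p - m) / (σ + 2)) * v 0 * v 1,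
        v 2 * (σ + 2 + (p - m) * v 1)])
    (P : Fin 3 → ℝ)
    (hP : P = ![2 * (σ + 2) * (m * (N : ℝ) - (N : ℝ) + 2) / (L * (1 - m)), -2 / (1 - m), 0])
    (J : Matrix (Fin 3) (Fin 3) ℝ)
    (hJ : ∀ i j, J i j = fderiv ℝ (fun v => F v i) P (Pi.single j 1)) :
    0 < P 0 ∧ F P = 0 ∧
    J.charpoly = (X - C (-L / (1 - m))) *
        (X ^ 2 - C (((1 - m) ^ 2 * (σ + 2) * (N : ℝ) + 2 * (m ^ 2 - 1) * σ
            + 4 * (m * p - 1)) / (L * (1 - m))) * X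
          + C (-2 * (m * (N : ℝ) - (N : ℝ) + 2) / (1 - m))) ∧
    0 < -L / (1 - m) ∧
    0 < -2 * (m * (N : ℝ) - (N : ℝ) + 2) / (1 - m) ∧
    ((1 - m) ^ 2 * (σ + 2) * (N : ℝ) + 2 * (m ^ 2 - 1) * σ + 4 * (m * p - 1))
        / (L * (1 - m)) < 0 := by
  -- basic inequalities
  have hN3 : (3 : ℝ) ≤ (N : ℝ) := by exact_mod_cast hN
  have hN2 : (0 : ℝ) < (N : ℝ) - 2 := by linarith
  have hNpos : (0 : ℝ) < (N : ℝ) := by linarith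
  have hmN : m * (N : ℝ) < (N : ℝ) - 2 := by
    have := (lt_div_iff₀ hNpos).mp hmc; linarith
  have hmn : m * (N : ℝ) - (N : ℝ) + 2 < 0 := by linarith
  have hm1 : m < 1 := by nlinarith
  have h1m : (0 : ℝ) < 1 - m := by linarith
  have hLneg : L < 0 := by nlinarith
  have hσ2 : (0 : ℝ) < σ + 2 := by linarith
  have hLm : L * (1 - m) < 0 := mul_neg_of_neg_of_pos hLneg h1m
  have hLne : L ≠ 0 := ne_of_lt hLneg
  have h1mne : (1 : ℝ) - m ≠ 0 := ne_of_gt h1m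
  have hσ2ne : σ + 2 ≠ 0 := ne_of_gt hσ2
  have hLmne : L * (1 - m) ≠ 0 := ne_of_lt hLm
  -- coordinates of P
  have hP0 : P 0 = 2 * (σ + 2) * (m * (N : ℝ) - (N : ℝ) + 2) / (L * (1 - m)) := by
    rw [hP]; rfl
  have hP1 : P 1 = -2 / (1 - m) := by rw [hP]; rfl
  have hP2 : P 2 = 0 := by rw [hP]; rfl
  -- positivity of S
  have hpc' : m * ((N : ℝ) + σ) < p * ((N : ℝ) - 2) := by
    rw [hpcd] at hpc
    have := (div_lt_iff₀ hN2).mp hpc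
    linarith
  have hSpos : 0 < (1 - m) ^ 2 * (σ + 2) * (N : ℝ) + 2 * (m ^ 2 - 1) * σ + 4 * (m * p - 1) := by
    have key : 0 < ((1 - m) ^ 2 * (σ + 2) * (N : ℝ) + 2 * (m ^ 2 - 1) * σ + 4 * (m * p - 1))
        * ((N : ℝ) - 2) := by
      nlinarith [mul_pos hm0 (sub_pos.mpr hpc'),
        mul_nonneg (sq_nonneg (m * (N : ℝ) - (N : ℝ) + 2)) hσ2.le]
    nlinarith [key]
  -- the first claim
  have hPpos : 0 < P 0 := by
    rw [hP0, div_pos_iff]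
    right
    constructor
    · nlinarith
    · exact hLm
  -- derivatives of the components
  have h0 : HasFDerivAt (fun v : Fin 3 → ℝ => v 0)
      (ContinuousLinearMap.proj (R := ℝ) (φ := fun _ : Fin 3 => ℝ) 0) P :=
    hasFDerivAt_apply 0 P
  have h1 : HasFDerivAt (fun v : Fin 3 → ℝ => v 1)
      (ContinuousLinearMap.proj (R := ℝ) (φ := fun _ : Fin 3 => ℝ) 1) P :=
    hasFDerivAt_apply 1 P
  have h2 : HasFDerivAt (fun v : Fin 3 → ℝ => v 2)
      (ContinuousLinearMap.proj (R := ℝ) (φ := fun _ : Fin 3 => ℝ) 2) P :=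
    hasFDerivAt_apply 2 P
  have ha0 := (h1.const_mul (1 - m)).const_add 2
  have D0 := h0.mul ha0
  have D1 := ((((h0.neg).sub (h1.const_mul ((N : ℝ) - 2))).sub h2).sub
      ((h1.mul h1).const_mul m)).sub ((h0.const_mul ((p - m) / (σ + 2))).mul h1)
  have ha2 := (h1.const_mul (p - m)).const_add (σ + 2)
  have D2 := h2.mul ha2
  -- identify component functions
  have hf0 : (fun v => F v 0) = fun v : Fin 3 → ℝ => v 0 * (2 + (1 - m) * v 1) := by
    funext v; rw [hF]; rfl
  have hf1 : (fun v => F v 1) = fun v : Fin 3 → ℝ =>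
      -v 0 - ((N : ℝ) - 2) * v 1 - v 2 - m * (v 1 * v 1)
        - (p - m) / (σ + 2) * v 0 * v 1 := by
    funext v; rw [hF]; show _ = _; simp only [Matrix.cons_val_one, Matrix.head_cons, Matrix.cons_val_zero]; ring
  have hf2 : (fun v => F v 2) = fun v : Fin 3 → ℝ => v 2 * (σ + 2 + (p - m) * v 1) := by
    funext v; rw [hF]; rfl
  have fd0 : fderiv ℝ (fun v : Fin 3 → ℝ => v 0 * (2 + (1 - m) * v 1)) P = _ := D0.fderiv
  have fd1 : fderiv ℝ (fun v : Fin 3 → ℝ =>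
      -v 0 - ((N : ℝ) - 2) * v 1 - v 2 - m * (v 1 * v 1)
        - (p - m) / (σ + 2) * v 0 * v 1) P = _ := D1.fderiv
  have fd2 : fderiv ℝ (fun v : Fin 3 → ℝ => v 2 * (σ + 2 + (p - m) * v 1)) P = _ := D2.fderiv
  -- entries of J
  have hJ0 : ∀ j, J 0 j = P 0 * ((1 - m) * (Pi.single j 1 : Fin 3 → ℝ) 1)
      + (2 + (1 - m) * P 1) * (Pi.single j 1 : Fin 3 → ℝ) 0 := by
    intro j
    rw [hJ, hf0, fd0]
    simp only [ContinuousLinearMap.add_apply, ContinuousLinearMap.smul_apply,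
      ContinuousLinearMap.proj_apply, smul_eq_mul]
  have hJ1 : ∀ j, J 1 j = -((Pi.single j 1 : Fin 3 → ℝ) 0) - ((N : ℝ) - 2) * (Pi.single j 1 : Fin 3 → ℝ) 1
      - (Pi.single j 1 : Fin 3 → ℝ) 2 - m * (P 1 * (Pi.single j 1 : Fin 3 → ℝ) 1 + P 1 * (Pi.single j 1 : Fin 3 → ℝ) 1)
      - ((p - m) / (σ + 2) * P 0 * (Pi.single j 1 : Fin 3 → ℝ) 1
          + P 1 * ((p - m) / (σ + 2) * (Pi.single j 1 : Fin 3 → ℝ) 0)) := by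
    intro j
    rw [hJ, hf1, fd1]
    simp only [ContinuousLinearMap.coe_sub', ContinuousLinearMap.coe_add',
      ContinuousLinearMap.coe_smul', ContinuousLinearMap.neg_apply, Pi.sub_apply,
      Pi.add_apply, Pi.smul_apply, ContinuousLinearMap.proj_apply, smul_eq_mul,
      ContinuousLinearMap.add_apply, ContinuousLinearMap.sub_apply,
      ContinuousLinearMap.smul_apply]
  have hJ2 : ∀ j, J 2 j = P 2 * ((p - m) * (Pi.single j 1 : Fin 3 → ℝ) 1)
      + (σ + 2 + (p - m) * P 1) * (Pi.single j 1 : Fin 3 → ℝ) 2 := by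
    intro j
    rw [hJ, hf2, fd2]
    simp only [ContinuousLinearMap.add_apply, ContinuousLinearMap.smul_apply,
      ContinuousLinearMap.proj_apply, smul_eq_mul]
  have hs00 : (Pi.single 0 1 : Fin 3 → ℝ) 0 = 1 := rfl
  have hs01 : (Pi.single 0 1 : Fin 3 → ℝ) 1 = 0 := rfl
  have hs02 : (Pi.single 0 1 : Fin 3 → ℝ) 2 = 0 := rfl
  have hs10 : (Pi.single 1 1 : Fin 3 → ℝ) 0 = 0 := rfl
  have hs11 : (Pi.single 1 1 : Fin 3 → ℝ) 1 = 1 := rfl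
  have hs12 : (Pi.single 1 1 : Fin 3 → ℝ) 2 = 0 := rfl
  have hs20 : (Pi.single 2 1 : Fin 3 → ℝ) 0 = 0 := rfl
  have hs21 : (Pi.single 2 1 : Fin 3 → ℝ) 1 = 0 := rfl
  have hs22 : (Pi.single 2 1 : Fin 3 → ℝ) 2 = 1 := rfl
  have hJ00 : J 0 0 = 0 := by
    rw [hJ0, hs00, hs01, hP1]; field_simp; ring
  have hJ01 : J 0 1 = P 0 * (1 - m) := by
    rw [hJ0, hs10, hs11]; ring
  have hJ02 : J 0 2 = 0 := by
    rw [hJ0, hs20, hs21]; ring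
  have hJ10 : J 1 0 = -1 - P 1 * ((p - m) / (σ + 2)) := by
    rw [hJ1, hs00, hs01, hs02]; ring
  have hJ11 : J 1 1 = ((1 - m) ^ 2 * (σ + 2) * (N : ℝ) + 2 * (m ^ 2 - 1) * σ
      + 4 * (m * p - 1)) / (L * (1 - m)) := by
    rw [hJ1, hs10, hs11, hs12, hP0, hP1, eq_div_iff hLmne]
    field_simp
    rw [hLd]
    ring
  have hJ20 : J 2 0 = 0 := by
    rw [hJ2, hs01, hs02, hP2]; ring
  have hJ21 : J 2 1 = 0 := by
    rw [hJ2, hs11, hs12, hP2]; ring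
  have hJ22 : J 2 2 = -L / (1 - m) := by
    rw [hJ2, hs21, hs22, hP1, hP2]
    field_simp
    rw [hLd]
    ring
  have hprod : -(J 0 1 * J 1 0) = -2 * (m * (N : ℝ) - (N : ℝ) + 2) / (1 - m) := by
    rw [hJ01, hJ10, hP0, hP1]
    field_simp
    rw [hLd]
    ring
  refine ⟨hPpos, ?_, ?_, ?_, ?_, ?_⟩
  · -- F P = 0
    rw [hF]
    funext i
    fin_cases i
    · show P 0 * (2 + (1 - m) * P 1) = 0
      rw [hP1]; field_simp; ring_nf
    · show -P 0 - ((N : ℝ) - 2) * P 1 - P 2 - m * (P 1) ^ 2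
          - (p - m) / (σ + 2) * P 0 * P 1 = 0
      rw [hP0, hP1, hP2]
      field_simp
      rw [hLd]
      ring
    · show P 2 * (σ + 2 + (p - m) * P 1) = 0
      rw [hP2]; ring
  · -- charpoly
    rw [charpoly_aux3 J hJ00 hJ02 hJ20 hJ21, hJ22, hJ11, hprod]
  · exact div_pos (by linarith) h1m
  · exact div_pos (by nlinarith) h1m
  · exact div_neg_of_pos_of_neg hSpos hLm
end

section
/- Let 0 < m < 1, p > 1, α > 0, β > 0 with α(p-1) ≠ 0. The curves w^{p-1} / (x^{m+p-2} (x + α(p-1)w)^{p-m}) = const are first integrals of the planar homogeneous quadratic system ẋ = (1/β)x(x - α(1-m)w), ẇ = (1/β)w(2x + α(m+p-2)w) on the region x > 0, w > 0, x + α(p-1)w > 0: the derivative of G(x,w) = (p-1)log w - (m+p-2)log x - (p-m)log(x+α(p-1)w) along the flow vanishes. -/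
theorem first_integral_homogeneous_system (m p α β : ℝ)
    (hm0 : 0 < m) (hm1 : m < 1) (hp : 1 < p) (hα : 0 < α) (hβ : 0 < β)
    (x w : ℝ → ℝ) (hxd : Differentiable ℝ x) (hwd : Differentiable ℝ w)
    (hxpos : ∀ t : ℝ, 0 < x t) (hwpos : ∀ t : ℝ, 0 < w t)
    (hx : ∀ t : ℝ, deriv x t = (1 / β) * (x t * (x t - α * (1 - m) * w t)))
    (hw : ∀ t : ℝ, deriv w t = (1 / β) * (w t * (2 * x t + α * (m + p - 2) * w t))) :
    ∀ t : ℝ, deriv (fun s => (p - 1) * Real.log (w s) - (m + p - 2) * Real.log (x s)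
        - (p - m) * Real.log (x s + α * (p - 1) * w s)) t = 0 := by
  intro t
  have hX := hxpos t
  have hW := hwpos t
  have hS : 0 < x t + α * (p - 1) * w t := by nlinarith [mul_pos hα hW, mul_pos (mul_pos hα hW) (sub_pos.mpr hp)]
  have h1 : HasDerivAt x (deriv x t) t := (hxd t).hasDerivAt
  have h2 : HasDerivAt w (deriv w t) t := (hwd t).hasDerivAt
  have hlw : HasDerivAt (fun s => Real.log (w s)) (deriv w t / w t) t :=
    h2.log (ne_of_gt hW)
  have hlx : HasDerivAt (fun s => Real.log (x s)) (deriv x t / x t) t :=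
    h1.log (ne_of_gt hX)
  have hSd : HasDerivAt (fun s => x s + α * (p - 1) * w s)
      (deriv x t + α * (p - 1) * deriv w t) t := h1.add (h2.const_mul (α * (p - 1)))
  have hlS : HasDerivAt (fun s => Real.log (x s + α * (p - 1) * w s))
      ((deriv x t + α * (p - 1) * deriv w t) / (x t + α * (p - 1) * w t)) t :=
    hSd.log (ne_of_gt hS)
  have H := ((hlw.const_mul (p - 1)).sub (hlx.const_mul (m + p - 2))).sub
    (hlS.const_mul (p - m))
  have H' : HasDerivAt (fun s => (p - 1) * Real.log (w s) - (m + p - 2) * Real.log (x s)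
      - (p - m) * Real.log (x s + α * (p - 1) * w s)) _ t := H
  rw [H'.deriv, hx t, hw t]
  have hβ' : β ≠ 0 := ne_of_gt hβ
  have hS' : x t + α * (p - 1) * w t ≠ 0 := ne_of_gt hS
  have e : (p - 1) * (1 / β * (w t * (2 * x t + α * (m + p - 2) * w t)) / w t) - (m + p - 2) * (1 / β * (x t * (x t - α * (1 - m) * w t)) / x t) = (p - m) * ((1 / β) * (x t + α * (m + p - 2) * w t)) := by
    field_simp
    ring
  have e2 : 1 / β * (x t * (x t - α * (1 - m) * w t)) + α * (p - 1) * (1 / β * (w t * (2 * x t + α * (m + p - 2) * w t))) = (x t + α * (p - 1) * w t) * ((1 / β) * (x t + α * (m + p - 2) * w t)) := by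
    ring
  rw [e, e2, mul_div_cancel_left₀ _ hS']
  ring
end
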